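/- With the hypotheses in the context, the map Γ restricted to Grid(𝒯) is a size-preserving bijection from Grid(𝒯) onto Grid(𝒯'). In particular, for every n the number of gridded permutations of size n in Grid(𝒯) equals the number of gridded permutations of size n in Grid(𝒯') (row separation is an equivalence strategy). -/

import Mathlib

/-- A (raw) gridded permutation: a permutation of `Fin n` (recording the size-`n`
underlying permutation) together with a cell in `ℕ × ℕ` for each index. -/
structure GP where
  n : ℕ
  perm : Equiv.Perm (Fin n)
  cells : Fin n → ℕ × ℕ

/-- The consistency condition for a gridded permutation: cells are weakly
increasing in the x-coordinate along positions, and weakly increasing in the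
y-coordinate along values. -/
def GP.Consistent (g : GP) : Prop :=
  (∀ i j : Fin g.n, i < j → (g.cells i).1 ≤ (g.cells j).1) ∧
  (∀ i j : Fin g.n, g.perm i < g.perm j → (g.cells i).2 ≤ (g.cells j).2)

/-- `g.Contains h` means `h ≤ g`: there is a strictly increasing choice of
indices of `g` whose values are order-isomorphic to `h` and whose cells agree
with those of `h`. -/
def GP.Contains (g h : GP) : Prop :=
  ∃ f : Fin h.n → Fin g.n, StrictMono f ∧
    (∀ i j : Fin h.n, (h.perm i < h.perm j ↔ g.perm (f i) < g.perm (f j))) ∧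
    ∀ i : Fin h.n, g.cells (f i) = h.cells i

/-- `𝒢^(t,u)`: the set of (consistent) gridded permutations all of whose cells lie in
`{0,…,t−1} × {0,…,u−1}`. -/
def Ggrid (t u : ℕ) : Set GP :=
  {g | g.Consistent ∧ ∀ i : Fin g.n, (g.cells i).1 < t ∧ (g.cells i).2 < u}

/-- `Grid` of the tiling `((t,u), O, R)`: the gridded permutations in `𝒢^(t,u)` avoiding
every obstruction in `O` and containing at least one element of every requirement
list in `R`. -/
def GridSet (t u : ℕ) (O : Set GP) (R : List (Set GP)) : Set GP :=
  {g | g ∈ Ggrid t u ∧ (∀ o ∈ O, ¬ g.Contains o) ∧ ∀ Ri ∈ R, ∃ x ∈ Ri, g.Contains x}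

/-- The size-1 gridded permutation in cell `d`. -/
def gp1 (d : ℕ × ℕ) : GP := ⟨1, Equiv.refl _, fun _ => d⟩

/-- The size-2 gridded permutation with underlying pattern `12` and cells `d1, d2`. -/
def gp12 (d1 d2 : ℕ × ℕ) : GP := ⟨2, Equiv.refl _, ![d1, d2]⟩

/-- The size-2 gridded permutation with underlying pattern `21` and cells `d1, d2`. -/
def gp21 (d1 d2 : ℕ × ℕ) : GP := ⟨2, Equiv.swap 0 1, ![d1, d2]⟩

open Classical in
/-- The cell map `γ` of row separation at row `r` with columns `S`. -/
noncomputable def gammaCell (r : ℕ) (S : Set ℕ) (d : ℕ × ℕ) : ℕ × ℕ :=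
  if d.2 < r ∨ (d.2 = r ∧ d.1 ∈ S) then d else (d.1, d.2 + 1)

/-- The map `Γ` of row separation, applying `γ` to every cell. -/
noncomputable def rowSepMap (r : ℕ) (S : Set ℕ) (g : GP) : GP :=
  ⟨g.n, g.perm, fun i => gammaCell r S (g.cells i)⟩

/-- The critical row patterns with respect to row `r` and column set `S`. -/
def Crit (r : ℕ) (S : Set ℕ) : Set GP :=
  {x | (∃ i i' : ℕ, i ∈ S ∧ i' ∉ S ∧ i < i' ∧ x = gp21 (i, r) (i', r)) ∨
       (∃ i i' : ℕ, i' ∉ S ∧ i ∈ S ∧ i' < i ∧ x = gp12 (i', r) (i, r))}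

/-- `g` avoids all critical row patterns with respect to `r` and `S`. -/
def AvoidsCrit (r : ℕ) (S : Set ℕ) (g : GP) : Prop :=
  ∀ x ∈ Crit r S, ¬ g.Contains x

/-- The number of gridded permutations of size `m` in a set `X`. -/
noncomputable def sizeCount (X : Set GP) (m : ℕ) : ℕ :=
  Nat.card {g : GP // g ∈ X ∧ g.n = m}

/-- `Grid(𝒯')` for the tiling `𝒯'` produced by row separation at row `r` with
column set `S` from the tiling `𝒯 = ((t,u), O, R)`. -/
noncomputable def sepGrid (t u r : ℕ) (S : Set ℕ) (O : Set GP) (R : List (Set GP)) :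
    Set GP :=
  GridSet t (u + 1)
    ((rowSepMap r S '' (O \ (Crit r S ∩ Ggrid t u))) ∪
      ({x | ∃ i : ℕ, i < t ∧ i ∉ S ∧ x = gp1 (i, r)} ∪
       {x | ∃ i : ℕ, i < t ∧ i ∈ S ∧ x = gp1 (i, r + 1)}))
    (R.map fun Ri => rowSepMap r S '' Ri)

/-! `γ` lifts exactly the points of row `r` in columns outside `S` by one row, and it is injective
with left inverse `δ`, which lowers every cell above row `r`. Since `γ` is injective and keeps
columns, `Γ g` contains `Γ h` iff `g` contains `h`, so obstructions and requirements transfer.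
`Γ g` stays consistent iff no point of row `r` outside `S` lies below one inside `S`, which is
what avoiding the critical row patterns (obstructions of `𝒯`) says. Conversely the size-1
obstructions of `𝒯'` force every cell of an element `h` of `Grid(𝒯')` into the image of `γ`, so
`Γ (Δ h) = h`; `Δ h` is consistent because `δ` is monotone in rows, and it avoids the critical
patterns because its image `h` is consistent. -/

def deltaCell (r : ℕ) (d : ℕ × ℕ) : ℕ × ℕ := if d.2 ≤ r then d else (d.1, d.2 - 1)

def rowSepInv (r : ℕ) (g : GP) : GP := ⟨g.n, g.perm, fun i => deltaCell r (g.cells i)⟩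

section Cells

variable {r : ℕ} {S : Set ℕ}

lemma gammaCell_fst (d : ℕ × ℕ) : (gammaCell r S d).1 = d.1 := by
  unfold gammaCell; split <;> rfl

lemma deltaCell_fst (d : ℕ × ℕ) : (deltaCell r d).1 = d.1 := by
  unfold deltaCell; split <;> rfl

lemma gammaCell_snd_le_succ (d : ℕ × ℕ) : (gammaCell r S d).2 ≤ d.2 + 1 := by
  unfold gammaCell; split <;> simp

lemma deltaCell_gammaCell (d : ℕ × ℕ) : deltaCell r (gammaCell r S d) = d := by
  unfold gammaCell deltaCell
  split_ifs <;> grind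

lemma gammaCell_injective : Function.Injective (gammaCell r S) :=
  Function.LeftInverse.injective deltaCell_gammaCell

lemma gammaCell_deltaCell {d : ℕ × ℕ} (h₁ : d.2 = r → d.1 ∈ S) (h₂ : d.2 = r + 1 → d.1 ∉ S) :
    gammaCell r S (deltaCell r d) = d := by
  unfold gammaCell deltaCell
  split_ifs <;> grind

lemma gammaCell_row_of_mem {i : ℕ} (hi : i ∈ S) : gammaCell r S (i, r) = (i, r) := by
  simp [gammaCell, hi]

lemma gammaCell_row_of_notMem {i : ℕ} (hi : i ∉ S) : gammaCell r S (i, r) = (i, r + 1) := by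
  simp [gammaCell, hi]

lemma gammaCell_ne_of_notMem {i : ℕ} (hi : i ∉ S) (d : ℕ × ℕ) : gammaCell r S d ≠ (i, r) := by
  unfold gammaCell
  split_ifs <;> grind

lemma gammaCell_ne_of_mem {i : ℕ} (hi : i ∈ S) (d : ℕ × ℕ) :
    gammaCell r S d ≠ (i, r + 1) := by
  unfold gammaCell
  split_ifs <;> grind

lemma gammaCell_snd_le {a b : ℕ × ℕ} (h : a.2 ≤ b.2)
    (hab : a.2 = r → b.2 = r → b.1 ∈ S → a.1 ∈ S) :
    (gammaCell r S a).2 ≤ (gammaCell r S b).2 := by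
  unfold gammaCell
  split_ifs <;> grind

lemma deltaCell_snd_le {a b : ℕ × ℕ} (h : a.2 ≤ b.2) : (deltaCell r a).2 ≤ (deltaCell r b).2 := by
  unfold deltaCell
  split_ifs <;> grind

lemma deltaCell_snd_lt {u : ℕ} (hr : r < u) {d : ℕ × ℕ} (h : d.2 < u + 1) :
    (deltaCell r d).2 < u := by
  unfold deltaCell
  split_ifs <;> grind

end Cells

namespace GP

lemma Contains.mem_Ggrid {t u : ℕ} {g h : GP} (hgh : g.Contains h) (hg : g ∈ Ggrid t u) :
    h ∈ Ggrid t u := by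
  obtain ⟨f, hf, hperm, hcells⟩ := hgh
  obtain ⟨⟨hx, hy⟩, hbound⟩ := hg
  refine ⟨⟨fun i j hij => ?_, fun i j hij => ?_⟩, fun i => hcells i ▸ hbound (f i)⟩
  · simpa only [hcells] using hx _ _ (hf hij)
  · simpa only [hcells] using hy _ _ ((hperm i j).mp hij)

lemma contains_gp1_iff (g : GP) (d : ℕ × ℕ) : g.Contains (gp1 d) ↔ ∃ k, g.cells k = d := by
  unfold gp1
  refine ⟨fun ⟨f, _, _, hc⟩ => ⟨f 0, hc 0⟩, fun ⟨k, hk⟩ => ⟨fun _ => k, ?_, ?_, fun _ => hk⟩⟩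
  · exact fun a b hab => absurd hab (Subsingleton.elim a b).not_lt
  · intro i j
    simp [Subsingleton.elim i j]

lemma contains_mk_two_iff (g : GP) (σ : Equiv.Perm (Fin 2)) (c : Fin 2 → ℕ × ℕ) :
    g.Contains ⟨2, σ, c⟩ ↔ ∃ p q : Fin g.n, p < q ∧ (σ 0 < σ 1 ↔ g.perm p < g.perm q) ∧
      g.cells p = c 0 ∧ g.cells q = c 1 := by
  constructor
  · rintro ⟨f, hf, hperm, hc⟩
    exact ⟨f 0, f 1, hf Fin.zero_lt_one, hperm 0 1, hc 0, hc 1⟩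
  · rintro ⟨p, q, hpq, hperm, hp, hq⟩
    have hσ : σ 0 ≠ σ 1 := σ.injective.ne Fin.zero_ne_one
    have hg : g.perm p ≠ g.perm q := g.perm.injective.ne hpq.ne
    refine ⟨![p, q], ?_, ?_, ?_⟩
    · intro a b hab
      fin_cases a <;> fin_cases b <;> simp_all
    · intro i j
      fin_cases i <;> fin_cases j <;> simp [hperm]
      grind
    · intro i
      fin_cases i <;> simp [hp, hq]

lemma contains_gp12_iff (g : GP) (d₁ d₂ : ℕ × ℕ) :
    g.Contains (gp12 d₁ d₂) ↔
      ∃ p q : Fin g.n, p < q ∧ g.perm p < g.perm q ∧ g.cells p = d₁ ∧ g.cells q = d₂ := by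
  simp [gp12, contains_mk_two_iff]

lemma contains_gp21_iff (g : GP) (d₁ d₂ : ℕ × ℕ) :
    g.Contains (gp21 d₁ d₂) ↔
      ∃ p q : Fin g.n, p < q ∧ g.perm q < g.perm p ∧ g.cells p = d₁ ∧ g.cells q = d₂ := by
  simp only [gp21, contains_mk_two_iff, Equiv.swap_apply_left, Equiv.swap_apply_right]
  refine exists₂_congr fun p q => and_congr_right fun hpq => ?_
  have := g.perm.injective.ne hpq.ne
  have hswap : ¬ (1 : Fin 2) < 0 := by decide
  simp only [hswap, false_iff, not_lt, Matrix.cons_val_zero, Matrix.cons_val_one,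
    Matrix.cons_val_fin_one, le_iff_lt_or_eq]
  tauto

end GP

section RowSeparation

variable {r : ℕ} {S : Set ℕ}

lemma rowSepInv_rowSepMap (g : GP) : rowSepInv r (rowSepMap r S g) = g := by
  obtain ⟨n, σ, c⟩ := g
  simp only [rowSepInv, rowSepMap, deltaCell_gammaCell]

lemma rowSepMap_injective : Function.Injective (rowSepMap r S) :=
  Function.LeftInverse.injective rowSepInv_rowSepMap

lemma rowSepMap_rowSepInv {g : GP} (h₁ : ∀ k, (g.cells k).2 = r → (g.cells k).1 ∈ S)
    (h₂ : ∀ k, (g.cells k).2 = r + 1 → (g.cells k).1 ∉ S) : rowSepMap r S (rowSepInv r g) = g := by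
  obtain ⟨n, σ, c⟩ := g
  simp only [rowSepInv, rowSepMap, GP.mk.injEq, heq_eq_eq, true_and]
  exact funext fun k => gammaCell_deltaCell (h₁ k) (h₂ k)

lemma rowSepMap_contains_rowSepMap_iff (g h : GP) :
    (rowSepMap r S g).Contains (rowSepMap r S h) ↔ g.Contains h :=
  exists_congr fun _ => and_congr_right fun _ => and_congr_right fun _ =>
    forall_congr' fun _ => gammaCell_injective.eq_iff

/-- A critical pattern would become a point of row `r + 1` lying below a point of row `r`. -/
lemma avoidsCrit_of_consistent_rowSepMap {g : GP} (hg : (rowSepMap r S g).Consistent) :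
    AvoidsCrit r S g := by
  have hy : ∀ p q, g.perm p < g.perm q →
      (gammaCell r S (g.cells p)).2 ≤ (gammaCell r S (g.cells q)).2 := hg.2
  rintro x (⟨i, i', hi, hi', -, rfl⟩ | ⟨i, i', hi', hi, -, rfl⟩) hx
  · obtain ⟨p, q, -, hqp, hp, hq⟩ := (GP.contains_gp21_iff g _ _).mp hx
    have := hy q p hqp
    rw [hp, hq, gammaCell_row_of_mem hi, gammaCell_row_of_notMem hi'] at this
    omega
  · obtain ⟨p, q, -, hpq, hp, hq⟩ := (GP.contains_gp12_iff g _ _).mp hx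
    have := hy p q hpq
    rw [hp, hq, gammaCell_row_of_mem hi, gammaCell_row_of_notMem hi'] at this
    omega

lemma AvoidsCrit.perm_lt {g : GP} (hg : g.Consistent) (hav : AvoidsCrit r S g) {p q : Fin g.n}
    {i j : ℕ} (hp : g.cells p = (i, r)) (hq : g.cells q = (j, r)) (hi : i ∉ S) (hj : j ∈ S) :
    g.perm q < g.perm p := by
  have hij : i ≠ j := fun h => hi (h ▸ hj)
  have hpq : p ≠ q := fun h => hij (by simpa [h, hq] using hp.symm)
  refine lt_of_le_of_ne (not_lt.mp fun hlt => ?_) (g.perm.injective.ne hpq.symm)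
  rcases hpq.lt_or_gt with hpq | hqp
  · have hx : i ≤ j := by simpa [hp, hq] using hg.1 p q hpq
    exact hav _ (Or.inr ⟨j, i, hi, hj, hx.lt_of_ne hij, rfl⟩)
      ((GP.contains_gp12_iff g _ _).mpr ⟨p, q, hpq, hlt, hp, hq⟩)
  · have hx : j ≤ i := by simpa [hp, hq] using hg.1 q p hqp
    exact hav _ (Or.inl ⟨j, i, hj, hi, hx.lt_of_ne hij.symm, rfl⟩)
      ((GP.contains_gp21_iff g _ _).mpr ⟨q, p, hqp, hlt, hq, hp⟩)

lemma consistent_rowSepMap {g : GP} (hg : g.Consistent) (hav : AvoidsCrit r S g) :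
    (rowSepMap r S g).Consistent := by
  refine ⟨fun p q hpq => ?_, fun p q hpq => ?_⟩
  · simpa only [rowSepMap, gammaCell_fst] using hg.1 p q hpq
  · refine gammaCell_snd_le (hg.2 p q hpq) fun hp hq hqS => by_contra fun hpS => ?_
    exact (hav.perm_lt hg (Prod.ext rfl hp) (Prod.ext rfl hq) hpS hqS).asymm hpq

lemma avoidsCrit_of_mem_gridSet {t u : ℕ} {O : Set GP} {R : List (Set GP)}
    (hC : Crit r S ∩ Ggrid t u ⊆ O) {g : GP} (hg : g ∈ GridSet t u O R) : AvoidsCrit r S g :=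
  fun x hx hgx => hg.2.1 x (hC ⟨hx, hgx.mem_Ggrid hg.1⟩) hgx

lemma rowSepMap_mem_sepGrid {t u : ℕ} {O : Set GP} {R : List (Set GP)}
    (hC : Crit r S ∩ Ggrid t u ⊆ O) {g : GP} (hg : g ∈ GridSet t u O R) :
    rowSepMap r S g ∈ sepGrid t u r S O R := by
  have hav := avoidsCrit_of_mem_gridSet hC hg
  obtain ⟨⟨hcons, hbound⟩, havoid, hreq⟩ := hg
  refine ⟨⟨consistent_rowSepMap hcons hav, fun k => ⟨?_, ?_⟩⟩, ?_, ?_⟩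
  · simpa only [rowSepMap, gammaCell_fst] using (hbound k).1
  · exact (gammaCell_snd_le_succ _).trans_lt (Nat.succ_lt_succ (hbound k).2)
  · rintro o (⟨o, ⟨ho, -⟩, rfl⟩ | ⟨i, -, hi, rfl⟩ | ⟨i, -, hi, rfl⟩)
    · exact fun hgo => havoid o ho ((rowSepMap_contains_rowSepMap_iff g o).mp hgo)
    · exact fun hgo => ((GP.contains_gp1_iff _ _).mp hgo).elim
        fun k => gammaCell_ne_of_notMem hi _
    · exact fun hgo => ((GP.contains_gp1_iff _ _).mp hgo).elim
        fun k => gammaCell_ne_of_mem hi _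
  · simp only [List.mem_map, forall_exists_index, and_imp, forall_apply_eq_imp_iff₂]
    intro Ri hRi
    obtain ⟨x, hx, hgx⟩ := hreq Ri hRi
    exact ⟨_, Set.mem_image_of_mem _ hx, (rowSepMap_contains_rowSepMap_iff g x).mpr hgx⟩

lemma exists_rowSepMap_eq_of_mem_sepGrid {t u : ℕ} (hr : r < u) {O : Set GP}
    {R : List (Set GP)} {h : GP} (hh : h ∈ sepGrid t u r S O R) :
    ∃ g ∈ GridSet t u O R, rowSepMap r S g = h := by
  obtain ⟨⟨hcons, hbound⟩, havoid, hreq⟩ := hh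
  have h₁ : ∀ k, (h.cells k).2 = r → (h.cells k).1 ∈ S := fun k hk => by_contra fun hS =>
    havoid _ (Or.inr (Or.inl ⟨_, (hbound k).1, hS, rfl⟩))
      ((GP.contains_gp1_iff h _).mpr ⟨k, Prod.ext rfl hk⟩)
  have h₂ : ∀ k, (h.cells k).2 = r + 1 → (h.cells k).1 ∉ S := fun k hk hS =>
    havoid _ (Or.inr (Or.inr ⟨_, (hbound k).1, hS, rfl⟩))
      ((GP.contains_gp1_iff h _).mpr ⟨k, Prod.ext rfl hk⟩)
  have hΓ : rowSepMap r S (rowSepInv r h) = h := rowSepMap_rowSepInv h₁ h₂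
  have hcons' : (rowSepInv r h).Consistent :=
    ⟨fun p q hpq => by simpa only [rowSepInv, deltaCell_fst] using hcons.1 p q hpq,
      fun p q hpq => deltaCell_snd_le (hcons.2 p q hpq)⟩
  have hav : AvoidsCrit r S (rowSepInv r h) := avoidsCrit_of_consistent_rowSepMap (hΓ.symm ▸ hcons)
  refine ⟨rowSepInv r h, ⟨⟨hcons', fun k => ⟨?_, deltaCell_snd_lt hr (hbound k).2⟩⟩, ?_, ?_⟩, hΓ⟩
  · simpa only [rowSepInv, deltaCell_fst] using (hbound k).1
  · intro o ho hgo
    by_cases hcrit : o ∈ Crit r S ∩ Ggrid t u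
    · exact hav o hcrit.1 hgo
    · refine havoid _ (Or.inl ⟨o, ⟨ho, hcrit⟩, rfl⟩) ?_
      rwa [← hΓ, rowSepMap_contains_rowSepMap_iff]
  · intro Ri hRi
    obtain ⟨_, ⟨x, hx, rfl⟩, hhx⟩ := hreq _ (List.mem_map_of_mem hRi)
    rw [← hΓ, rowSepMap_contains_rowSepMap_iff] at hhx
    exact ⟨x, hx, hhx⟩

end RowSeparation

lemma sizeCount_eq_of_bijOn {f : GP → GP} {X Y : Set GP} (hf : Set.BijOn f X Y)
    (hn : ∀ g ∈ X, (f g).n = g.n) (m : ℕ) : sizeCount X m = sizeCount Y m := by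
  have hfm : Set.BijOn f {g | g ∈ X ∧ g.n = m} {g | g ∈ Y ∧ g.n = m} := by
    refine ⟨fun g hg => ⟨hf.mapsTo hg.1, (hn g hg.1).trans hg.2⟩,
      hf.injOn.mono fun _ hg => hg.1, fun y hy => ?_⟩
    obtain ⟨x, hx, rfl⟩ := hf.surjOn hy.1
    exact ⟨x, ⟨hx, (hn x hx).symm.trans hy.2⟩, rfl⟩
  exact Nat.card_congr (hfm.equiv f)

theorem rowSep_equivalence_general (t u r : ℕ) (hr : r < u) (S : Set ℕ)
    (O : Set GP) (R : List (Set GP))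
    (hC : Crit r S ∩ Ggrid t u ⊆ O) :
    Set.BijOn (rowSepMap r S) (GridSet t u O R) (sepGrid t u r S O R) ∧
    (∀ g ∈ GridSet t u O R, (rowSepMap r S g).n = g.n) ∧
    ∀ m : ℕ, sizeCount (GridSet t u O R) m = sizeCount (sepGrid t u r S O R) m := by
  have hbij : Set.BijOn (rowSepMap r S) (GridSet t u O R) (sepGrid t u r S O R) :=
    ⟨fun _ hg => rowSepMap_mem_sepGrid hC hg, rowSepMap_injective.injOn,
      fun _ hh => exists_rowSepMap_eq_of_mem_sepGrid hr hh⟩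
  exact ⟨hbij, fun _ _ => rfl, sizeCount_eq_of_bijOn hbij fun _ _ => rfl⟩

/-- Row separation is an equivalence strategy: `Γ` restricted to `Grid(𝒯)` is a
size-preserving bijection onto `Grid(𝒯')`; in particular for every `n` the two sets
have the same number of gridded permutations of size `n`. -/
theorem rowSep_equivalence (t u r : ℕ) (hr : r < u) (S : Set ℕ)
    (O : Set GP) (R : List (Set GP))
    (hO : O ⊆ Ggrid t u) (hR : ∀ Ri ∈ R, Ri ⊆ Ggrid t u)
    (hC : Crit r S ∩ Ggrid t u ⊆ O)
    (hanti : ∀ o1 ∈ O, ∀ o2 ∈ O, o1.Contains o2 → o1 = o2)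
    (hRavoid : ∀ Ri ∈ R, ∀ x ∈ Ri, AvoidsCrit r S x) :
    Set.BijOn (rowSepMap r S) (GridSet t u O R) (sepGrid t u r S O R) ∧
    (∀ g ∈ GridSet t u O R, (rowSepMap r S g).n = g.n) ∧
    ∀ m : ℕ, sizeCount (GridSet t u O R) m = sizeCount (sepGrid t u r S O R) m :=
  rowSep_equivalence_general t u r hr S O R hC
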